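/- arXiv:1003.1441 — 4 statements merged into one kernel-verified Lean document; each statement's English description precedes it below -/
import Mathlib

section
/- Let V₁ and V₂ be twice differentiable functions on ℝ, each solving V'' - 3V' = R(V) on ℝ with V(s) → -1 as s → -∞ and V(s) → -∞ as s → +∞, and each strictly decreasing with values < -1. Then there exists s₀ ∈ ℝ such that V₁(s) = V₂(s + s₀) for all s ∈ ℝ; that is, the boundary value problem V'' - 3V' = R(V), V(-∞) = -1, V(+∞) = -∞ has a unique solution up to translations s ↦ s + s₀. -/
open Real Filter Set Function Topology

/-!
Phase-plane argument. Below `-1` we have `R < 0`, so `V'' = 3V' + R(V) < 0`; hence a front has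
`V' < 0` and `V' → 0` at `-∞`. Its trajectory in the phase plane is the graph of
`W(v) = V'(V⁻¹ v)` over `v < -1`, which solves `W' = 3 + R(v) / W` with `W(-1⁻) = 0`. For two
fronts, `D = W₁ - W₂` satisfies `D' = -R D / (W₁ W₂)`, so `D` increases wherever it is positive;
since `D → 0` at `-1`, `D ≤ 0`, and by symmetry `W₁ = W₂`. Then `t ↦ V₂⁻¹ (V₁ t)` has derivative
`W₁ / W₂ = 1`, i.e. it is a translation.
-/

lemma tendsto_deriv_atBot_of_antitone_deriv {f : ℝ → ℝ} {a : ℝ} (hf : Differentiable ℝ f)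
    (hf' : Antitone (deriv f)) (hlim : Tendsto f atBot (𝓝 a)) :
    Tendsto (deriv f) atBot (𝓝 0) := by
  have mvt : ∀ x, ∃ ξ ∈ Ioo x (x + 1), deriv f ξ = f (x + 1) - f x := fun x => by
    simpa using exists_deriv_eq_slope f (lt_add_one x) hf.continuous.continuousOn
      (hf.differentiableOn (s := Ioo x (x + 1)))
  have lower : ∀ s, f (s + 1) - f s ≤ deriv f s := fun s => by
    obtain ⟨ξ, hξ, hξeq⟩ := mvt s
    exact hξeq ▸ hf' hξ.1.le
  have upper : ∀ s, deriv f s ≤ f s - f (s - 1) := fun s => by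
    obtain ⟨ξ, hξ, hξeq⟩ := mvt (s - 1)
    rw [sub_add_cancel] at hξ hξeq
    exact hξeq ▸ hf' hξ.2.le
  have hshift : ∀ t : ℝ, Tendsto (fun s => f (s + t)) atBot (𝓝 a) := fun t =>
    hlim.comp (tendsto_atBot_add_const_right _ t tendsto_id)
  refine tendsto_of_tendsto_of_tendsto_of_le_of_le ?_ ?_ lower upper
  · simpa using (hshift 1).sub hlim
  · simpa [sub_eq_add_neg] using hlim.sub (hshift (-1))

lemma range_eq_Iio_of_tendsto {V : ℝ → ℝ} {a : ℝ} (hV : Continuous V) (hlt : ∀ s, V s < a)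
    (hbot : Tendsto V atBot (𝓝 a)) (htop : Tendsto V atTop atBot) : range V = Iio a :=
  (range_subset_iff.2 hlt).antisymm fun _ hv => mem_range_of_exists_le_of_exists_ge hV
    (htop.eventually (eventually_le_atBot _)).exists
    (hbot.eventually (eventually_ge_nhds hv)).exists

lemma continuousAt_invFun_of_strictAnti {V : ℝ → ℝ} (hV : StrictAnti V) {v : ℝ}
    (hv : range V ∈ 𝓝 v) : ContinuousAt (invFun V) v := by
  have hmono : MonotoneOn (OrderDual.toDual ∘ invFun V) (range V) := by
    rintro _ ⟨x, rfl⟩ _ ⟨y, rfl⟩ hxy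
    simpa [leftInverse_invFun hV.injective _] using hV.le_iff_ge.1 hxy
  have himage : (OrderDual.toDual ∘ invFun V) '' range V = univ :=
    eq_univ_of_forall fun s =>
      ⟨V s.ofDual, mem_range_self _, by simp [leftInverse_invFun hV.injective _]⟩
  exact continuousAt_of_monotoneOn_of_image_mem_nhds (β := ℝᵒᵈ) hmono hv (himage ▸ univ_mem)

lemma hasDerivAt_invFun_of_strictAnti {V : ℝ → ℝ} (hV : StrictAnti V) {v V' : ℝ}
    (hv : range V ∈ 𝓝 v) (hderiv : HasDerivAt V V' (invFun V v)) (hV' : V' ≠ 0) :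
    HasDerivAt (invFun V) V'⁻¹ v :=
  hderiv.of_local_left_inverse (continuousAt_invFun_of_strictAnti hV hv) hV'
    (mem_of_superset hv fun _ hw => invFun_eq hw)

lemma le_of_tendsto_sub_of_hasDerivAt {R W₁ W₂ : ℝ → ℝ} {b c : ℝ} (hR : ∀ v < b, R v < 0)
    (hW₁ : ∀ v < b, W₁ v < 0)
    (hderiv₁ : ∀ v < b, HasDerivAt W₁ (c + R v / W₁ v) v)
    (hderiv₂ : ∀ v < b, HasDerivAt W₂ (c + R v / W₂ v) v)
    (hlim : Tendsto (fun v => W₁ v - W₂ v) (𝓝[<] b) (𝓝 0)) {v : ℝ} (hv : v < b) : W₁ v ≤ W₂ v := by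
  by_contra! hgap
  set δ := W₁ v - W₂ v
  have hD : ∀ x < b, HasDerivAt (W₁ - W₂) (R x / W₁ x - R x / W₂ x) x := fun x hx => by
    simpa using (hderiv₁ x hx).sub (hderiv₂ x hx)
  have hbarrier : ∀ x ∈ Ico v b, δ ≤ (W₁ - W₂) x := fun x hx => by
    have hsub : Icc v x ⊆ Iio b := fun y hy => hy.2.trans_lt hx.2
    refine image_le_of_deriv_right_lt_deriv_boundary' (a := v) (b := x) continuousOn_const
      (fun _ _ => hasDerivWithinAt_const _ _ δ) le_rfl
      (fun y hy => (hD y (hsub hy)).continuousAt.continuousWithinAt)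
      (fun y hy => (hD y (hsub (Ico_subset_Icc_self hy))).hasDerivWithinAt) ?_ ⟨hx.1, le_rfl⟩
    intro y hy hδy
    have hyb : y < b := hsub (Ico_subset_Icc_self hy)
    have hlt : W₂ y < W₁ y := by simp only [Pi.sub_apply] at hδy; linarith [sub_pos.2 hgap]
    rw [sub_pos, ← neg_div_neg_eq, ← neg_div_neg_eq (R y)]
    exact div_lt_div_of_pos_left (neg_pos.2 (hR y hyb)) (neg_pos.2 (hW₁ y hyb)) (neg_lt_neg hlt)
  have : δ ≤ 0 := ge_of_tendsto hlim <| by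
    filter_upwards [Ioo_mem_nhdsLT hv] with x hx using hbarrier x ⟨hx.1.le, hx.2⟩
  linarith [sub_pos.2 hgap]

noncomputable def phaseCurve (V : ℝ → ℝ) (v : ℝ) : ℝ :=
  deriv V (invFun V v)

lemma phaseCurve_apply_self {V : ℝ → ℝ} (hV : Injective V) (s : ℝ) :
    phaseCurve V (V s) = deriv V s := by
  rw [phaseCurve, leftInverse_invFun hV s]

lemma exists_eq_comp_add_of_deriv_eq_phaseCurve {U V : ℝ → ℝ} (hU : Differentiable ℝ U)
    (hV : Differentiable ℝ V) (hanti : StrictAnti V) (hV' : ∀ s, deriv V s ≠ 0)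
    (hrange : ∀ s, range V ∈ 𝓝 (U s)) (hode : ∀ s, deriv U s = phaseCurve V (U s)) :
    ∃ s₀, ∀ s, U s = V (s + s₀) := by
  set φ := invFun V ∘ U
  have hφ : ∀ s, HasDerivAt (fun t => φ t - t) 0 s := fun s => by
    have hinv := hasDerivAt_invFun_of_strictAnti hanti (hrange s) (hV _).hasDerivAt (hV' _)
    refine ((hinv.comp s (hU s).hasDerivAt).sub (hasDerivAt_id s)).congr_deriv ?_
    rw [hode, phaseCurve, inv_mul_cancel₀ (hV' _), sub_self]
  refine ⟨φ 0, fun s => ?_⟩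
  have hconst := is_const_of_deriv_eq_zero (fun t => (hφ t).differentiableAt)
    (fun t => (hφ t).deriv) s 0
  rw [show s + φ 0 = φ s by simp only [sub_zero] at hconst; linarith]
  exact (invFun_eq (mem_of_mem_nhds (hrange s) : U s ∈ range V)).symm

structure IsFront (R : ℝ → ℝ) (c a : ℝ) (V : ℝ → ℝ) : Prop where
  differentiable : Differentiable ℝ V
  differentiable_deriv : Differentiable ℝ (deriv V)
  ode : ∀ s, deriv (deriv V) s - c * deriv V s = R (V s)
  strictAnti : StrictAnti V
  lt : ∀ s, V s < a
  tendsto_atBot : Tendsto V atBot (𝓝 a)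
  tendsto_atTop : Tendsto V atTop atBot

namespace IsFront

variable {R V : ℝ → ℝ} {c a : ℝ}

lemma strictAnti_deriv (hV : IsFront R c a V) (hc : 0 ≤ c) (hR : ∀ v < a, R v < 0) :
    StrictAnti (deriv V) :=
  strictAnti_of_deriv_neg fun s => by
    have := mul_nonpos_of_nonneg_of_nonpos hc (hV.strictAnti.antitone.deriv_nonpos (x := s))
    linarith [hV.ode s, hR _ (hV.lt s)]

lemma deriv_neg (hV : IsFront R c a V) (hc : 0 ≤ c) (hR : ∀ v < a, R v < 0) (s : ℝ) :
    deriv V s < 0 :=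
  (hV.strictAnti_deriv hc hR (sub_one_lt s)).trans_le hV.strictAnti.antitone.deriv_nonpos

lemma range_eq (hV : IsFront R c a V) : range V = Iio a :=
  range_eq_Iio_of_tendsto hV.differentiable.continuous hV.lt hV.tendsto_atBot hV.tendsto_atTop

lemma hasDerivAt_phaseCurve (hV : IsFront R c a V) (hc : 0 ≤ c) (hR : ∀ v < a, R v < 0)
    {v : ℝ} (hv : v < a) : HasDerivAt (phaseCurve V) (c + R v / phaseCurve V v) v := by
  have hrange : range V ∈ 𝓝 v := hV.range_eq ▸ Iio_mem_nhds hv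
  set s := invFun V v
  have hVs : V s = v := invFun_eq (mem_of_mem_nhds hrange : v ∈ range V)
  have hinv := hasDerivAt_invFun_of_strictAnti hV.strictAnti hrange
    (hV.differentiable s).hasDerivAt (hV.deriv_neg hc hR s).ne
  refine ((hV.differentiable_deriv s).hasDerivAt.comp v hinv).congr_deriv ?_
  change _ = c + R v / deriv V s
  rw [← hVs, ← hV.ode s]
  field_simp [(hV.deriv_neg hc hR s).ne]
  ring

lemma tendsto_phaseCurve (hV : IsFront R c a V) (hc : 0 ≤ c) (hR : ∀ v < a, R v < 0) :
    Tendsto (phaseCurve V) (𝓝[<] a) (𝓝 0) := by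
  refine (tendsto_deriv_atBot_of_antitone_deriv hV.differentiable
    (hV.strictAnti_deriv hc hR).antitone hV.tendsto_atBot).comp ?_
  refine Filter.tendsto_atBot.2 fun M => ?_
  filter_upwards [Ioo_mem_nhdsLT (hV.lt M)] with v hv
  have hVv : V (invFun V v) = v := invFun_eq (hV.range_eq ▸ hv.2 : v ∈ range V)
  exact (hV.strictAnti.lt_iff_gt.1 (show V M < V (invFun V v) by rw [hVv]; exact hv.1)).le

lemma phaseCurve_eq {V₁ V₂ : ℝ → ℝ} (hV₁ : IsFront R c a V₁) (hV₂ : IsFront R c a V₂)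
    (hc : 0 ≤ c) (hR : ∀ v < a, R v < 0) {v : ℝ} (hv : v < a) :
    phaseCurve V₁ v = phaseCurve V₂ v := by
  have key : ∀ {U₁ U₂ : ℝ → ℝ}, IsFront R c a U₁ → IsFront R c a U₂ →
      phaseCurve U₁ v ≤ phaseCurve U₂ v := fun {U₁ U₂} hU₁ hU₂ =>
    le_of_tendsto_sub_of_hasDerivAt (W₁ := phaseCurve U₁) hR (fun _ _ => hU₁.deriv_neg hc hR _)
      (fun _ => hU₁.hasDerivAt_phaseCurve hc hR) (fun _ => hU₂.hasDerivAt_phaseCurve hc hR)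
      (by simpa only [sub_zero] using
        (hU₁.tendsto_phaseCurve hc hR).sub (hU₂.tendsto_phaseCurve hc hR)) hv
  exact (key hV₁ hV₂).antisymm (key hV₂ hV₁)

lemma exists_eq_comp_add {V₁ V₂ : ℝ → ℝ} (hV₁ : IsFront R c a V₁) (hV₂ : IsFront R c a V₂)
    (hc : 0 ≤ c) (hR : ∀ v < a, R v < 0) : ∃ s₀, ∀ s, V₁ s = V₂ (s + s₀) :=
  exists_eq_comp_add_of_deriv_eq_phaseCurve hV₁.differentiable hV₂.differentiable
    hV₂.strictAnti (fun s => (hV₂.deriv_neg hc hR s).ne)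
    (fun s => hV₂.range_eq ▸ Iio_mem_nhds (hV₁.lt s)) fun s => by
      rw [← phaseCurve_eq hV₁ hV₂ hc hR (hV₁.lt s), phaseCurve_apply_self hV₁.strictAnti.injective]

end IsFront

/-- Uniqueness up to translations: if `V₁` and `V₂` are twice differentiable
strictly decreasing solutions of `V'' - 3V' = R(V)` on `ℝ`, with values `< -1`,
`V(-∞) = -1` and `V(+∞) = -∞`, then `V₁(s) = V₂(s + s₀)` for some `s₀ ∈ ℝ`. -/
theorem uniqueness_up_to_translation
    (Q R : ℝ → ℝ)
    (hQ : ∀ v : ℝ, v < -1 → Q v < 0 ∧ Q v - Real.exp (Q v) = v)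
    (hR : ∀ v : ℝ, R v = if v < -1 then -2 * (1 - Real.exp (Q v)) ^ 2 else 4 * (v + 1))
    (V₁ V₂ : ℝ → ℝ)
    (hdiff₁ : ∀ s : ℝ, DifferentiableAt ℝ V₁ s ∧ DifferentiableAt ℝ (deriv V₁) s)
    (hdiff₂ : ∀ s : ℝ, DifferentiableAt ℝ V₂ s ∧ DifferentiableAt ℝ (deriv V₂) s)
    (hode₁ : ∀ s : ℝ, deriv (deriv V₁) s - 3 * deriv V₁ s = R (V₁ s))
    (hode₂ : ∀ s : ℝ, deriv (deriv V₂) s - 3 * deriv V₂ s = R (V₂ s))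
    (hanti₁ : StrictAnti V₁) (hanti₂ : StrictAnti V₂)
    (hlt₁ : ∀ s : ℝ, V₁ s < -1) (hlt₂ : ∀ s : ℝ, V₂ s < -1)
    (hbot₁ : Tendsto V₁ atBot (nhds (-1))) (hbot₂ : Tendsto V₂ atBot (nhds (-1)))
    (htop₁ : Tendsto V₁ atTop atBot) (htop₂ : Tendsto V₂ atTop atBot) :
    ∃ s₀ : ℝ, ∀ s : ℝ, V₁ s = V₂ (s + s₀) := by
  have hRneg : ∀ v < -1, R v < 0 := fun v hv => by
    have hexp : Real.exp (Q v) < 1 := Real.exp_lt_one_iff.2 (hQ v hv).1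
    rw [hR, if_pos hv]
    nlinarith
  exact IsFront.exists_eq_comp_add
    ⟨fun s => (hdiff₁ s).1, fun s => (hdiff₁ s).2, hode₁, hanti₁, hlt₁, hbot₁, htop₁⟩
    ⟨fun s => (hdiff₂ s).1, fun s => (hdiff₂ s).2, hode₂, hanti₂, hlt₂, hbot₂, htop₂⟩
    zero_le_three hRneg
end

section
/- Let V : ℝ → ℝ be a solution of V'' - 3V' = R(V) on ℝ with V < -1 everywhere, V(-∞) = -1 and V(+∞) = -∞, normalized so that V(0) = m and V'(0) = -n with n > 0. Then for all s ≥ 0 one has V'(s) = -(n + σ(s))·e^{3s}, where σ(s) = 2·∫₀^s (1 - e^{Q(V(s₁))})²·e^{-3s₁} ds₁ is a bounded increasing function on [0, ∞) with σ(0) = 0; in particular there exist constants 0 < c₁ ≤ c₂ and s₀ ≥ 0 with c₁·e^{3s} ≤ -V(s) ≤ c₂·e^{3s} for all s ≥ s₀, i.e. V(s) blows up to -∞ exactly as fast as -e^{3s}. -/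
open Real Filter Set

/-! On the solution `R (V) = -2 (1 - e^{Q V})² ∈ [-2, 0]`, so with the integrating factor `e^{-3s}`
the equation reads `(V' e^{-3s})' = -2 (1 - e^{Q V})² e^{-3s} ≤ 0`. Integrating from `0` gives
`V' e^{-3s} = -n - σ`, where `σ` is nondecreasing and at most `2 ∫₀^∞ e^{-3t} dt = 2/3`; the
integrand is integrable because it is a derivative of constant sign, so no regularity of `Q` is
needed. Hence `-(n + 2/3) e^{3s} ≤ V' ≤ -n e^{3s}` on `[0, ∞)`, and integrating once more traps
`-V` between two positive multiples of `e^{3s}` for large `s`. -/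

theorem one_sub_exp_sq_le_one {x : ℝ} (hx : x ≤ 0) : (1 - exp x) ^ 2 ≤ 1 := by
  have h₀ := exp_pos x
  have h₁ := exp_le_one_iff.2 hx
  nlinarith

theorem hasDerivAt_const_mul_exp_mul (k c t : ℝ) :
    HasDerivAt (fun s => k * exp (c * s)) (k * c * exp (c * t)) t :=
  ((((hasDerivAt_id' t).const_mul c).exp).const_mul k).congr_deriv (by ring)

theorem sub_le_sub_of_hasDerivAt_le {f g f' g' : ℝ → ℝ} {a b : ℝ}
    (hf : ∀ t, HasDerivAt f (f' t) t) (hg : ∀ t, HasDerivAt g (g' t) t)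
    (hfg : ∀ t, a < t → f' t ≤ g' t) (hab : a ≤ b) :
    f b - f a ≤ g b - g a := by
  have hmono : MonotoneOn (fun t => g t - f t) (Ici a) := by
    refine monotoneOn_of_hasDerivWithinAt_nonneg (convex_Ici a)
      (fun t _ => ((hg t).continuousAt.sub (hf t).continuousAt).continuousWithinAt)
      (fun t _ => ((hg t).sub (hf t)).hasDerivWithinAt) fun t ht => ?_
    rw [interior_Ici] at ht
    exact sub_nonneg.2 (hfg t ht)
  linarith [hmono self_mem_Ici hab hab]

theorem integral_eq_sub_of_hasDerivAt_of_nonneg {f f' : ℝ → ℝ}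
    (hf : ∀ t, HasDerivAt f (f' t) t) (hf' : ∀ t, 0 ≤ f' t) (a b : ℝ) :
    ∫ t in a..b, f' t = f b - f a :=
  intervalIntegral.integral_eq_sub_of_hasDerivAt (fun t _ => hf t)
    (intervalIntegral.intervalIntegrable_deriv_of_nonneg
      (fun t _ => (hf t).continuousAt.continuousWithinAt) (fun t _ => hf t) (fun t _ => hf' t))

theorem exists_mul_exp_le_le_mul_exp {u : ℝ → ℝ} {a b c k₁ k₂ : ℝ}
    (ha : 0 < a) (hab : a ≤ b) (hc : 0 < c)
    (hu : ∀ s, 0 ≤ s → a * exp (c * s) + k₁ ≤ u s ∧ u s ≤ b * exp (c * s) + k₂) :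
    ∃ c₁ c₂ s₀ : ℝ, 0 < c₁ ∧ c₁ ≤ c₂ ∧ 0 ≤ s₀ ∧
      ∀ s, s₀ ≤ s → c₁ * exp (c * s) ≤ u s ∧ u s ≤ c₂ * exp (c * s) := by
  have hlarge : ∀ᶠ s in atTop, max 1 (-2 * k₁ / a) ≤ exp (c * s) ∧ 0 ≤ s :=
    ((tendsto_exp_atTop.comp (tendsto_id.const_mul_atTop hc)).eventually_ge_atTop _).and
      (eventually_ge_atTop 0)
  obtain ⟨s₁, hs₁⟩ := eventually_atTop.1 hlarge
  refine ⟨a / 2, b + |k₂|, max s₁ 0, half_pos ha, by linarith [abs_nonneg k₂],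
    le_max_right _ _, fun s hs => ?_⟩
  obtain ⟨hexp, hs⟩ := hs₁ s (le_of_max_le_left hs)
  obtain ⟨hlow, hupp⟩ := hu s hs
  have hexp_one : 1 ≤ exp (c * s) := (le_max_left _ _).trans hexp
  have hexp_k₁ : -2 * k₁ ≤ a * exp (c * s) :=
    (div_le_iff₀' ha).1 ((le_max_right _ _).trans hexp)
  constructor
  · linarith
  · nlinarith [le_abs_self k₂, abs_nonneg k₂]

theorem exists_mul_exp_le_neg_le_mul_exp {V : ℝ → ℝ} {a b c : ℝ} (hV : Differentiable ℝ V)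
    (ha : 0 < a) (hab : a ≤ b) (hc : 0 < c)
    (hV' : ∀ t, 0 < t → -b * exp (c * t) ≤ deriv V t ∧ deriv V t ≤ -a * exp (c * t)) :
    ∃ c₁ c₂ s₀ : ℝ, 0 < c₁ ∧ c₁ ≤ c₂ ∧ 0 ≤ s₀ ∧
      ∀ s, s₀ ≤ s → c₁ * exp (c * s) ≤ -V s ∧ -V s ≤ c₂ * exp (c * s) := by
  refine exists_mul_exp_le_le_mul_exp (a := a / c) (b := b / c) (k₁ := -V 0 - a / c)
    (k₂ := -V 0 - b / c) (div_pos ha hc) (div_le_div_of_nonneg_right hab hc.le) hc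
    fun s hs => ?_
  have hV_deriv (t : ℝ) : HasDerivAt V (deriv V t) t := (hV t).hasDerivAt
  have hlow := sub_le_sub_of_hasDerivAt_le hV_deriv (hasDerivAt_const_mul_exp_mul (-a / c) c)
    (fun t ht => by rw [div_mul_cancel₀ _ hc.ne']; exact (hV' t ht).2) hs
  have hupp := sub_le_sub_of_hasDerivAt_le (hasDerivAt_const_mul_exp_mul (-b / c) c) hV_deriv
    (fun t ht => by rw [div_mul_cancel₀ _ hc.ne']; exact (hV' t ht).1) hs
  rw [mul_zero, exp_zero, mul_one] at hlow hupp
  constructor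
  · linear_combination hlow
  · linear_combination hupp

section IntegratingFactor

variable {V g : ℝ → ℝ} {c : ℝ}

theorem hasDerivAt_neg_deriv_mul_exp {t : ℝ} (hV : DifferentiableAt ℝ (deriv V) t)
    (hode : deriv (deriv V) t - c * deriv V t = -g t) :
    HasDerivAt (fun s => -(deriv V s * exp (-c * s))) (g t * exp (-c * t)) t := by
  have h := (hV.hasDerivAt.mul (hasDerivAt_const_mul_exp_mul 1 (-c) t)).neg
  simp only [one_mul] at h
  exact h.congr_deriv (by linear_combination -exp (-c * t) * hode)

theorem integral_mul_exp_eq_sub (hV : ∀ t, DifferentiableAt ℝ (deriv V) t)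
    (hode : ∀ t, deriv (deriv V) t - c * deriv V t = -g t) (hg : ∀ t, 0 ≤ g t) (a b : ℝ) :
    ∫ t in a..b, g t * exp (-c * t) = deriv V a * exp (-c * a) - deriv V b * exp (-c * b) :=
  (integral_eq_sub_of_hasDerivAt_of_nonneg (fun t => hasDerivAt_neg_deriv_mul_exp (hV t) (hode t))
    (fun t => mul_nonneg (hg t) (exp_pos _).le) a b).trans (by ring)

theorem deriv_eq_sub_integral_mul_exp (hV : ∀ t, DifferentiableAt ℝ (deriv V) t)
    (hode : ∀ t, deriv (deriv V) t - c * deriv V t = -g t) (hg : ∀ t, 0 ≤ g t) (s : ℝ) :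
    deriv V s = (deriv V 0 - ∫ t in 0..s, g t * exp (-c * t)) * exp (c * s) := by
  rw [integral_mul_exp_eq_sub hV hode hg, mul_zero, exp_zero, mul_one, sub_sub_cancel, mul_assoc,
    ← exp_add, neg_mul, neg_add_cancel, exp_zero, mul_one]

theorem monotone_integral_mul_exp (hV : ∀ t, DifferentiableAt ℝ (deriv V) t)
    (hode : ∀ t, deriv (deriv V) t - c * deriv V t = -g t) (hg : ∀ t, 0 ≤ g t) :
    Monotone fun s => ∫ t in 0..s, g t * exp (-c * t) := fun a b hab => by
  have := monotone_of_hasDerivAt_nonneg (fun t => hasDerivAt_neg_deriv_mul_exp (hV t) (hode t))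
    (fun t => mul_nonneg (hg t) (exp_pos _).le) hab
  simp only [integral_mul_exp_eq_sub hV hode hg]
  linarith

theorem integral_mul_exp_le (hV : ∀ t, DifferentiableAt ℝ (deriv V) t)
    (hode : ∀ t, deriv (deriv V) t - c * deriv V t = -g t) (hg : ∀ t, 0 ≤ g t) {K : ℝ}
    (hgK : ∀ t, g t ≤ K) (hc : 0 < c) {s : ℝ} (hs : 0 ≤ s) :
    ∫ t in 0..s, g t * exp (-c * t) ≤ K / c := by
  have hK : 0 ≤ K / c := div_nonneg ((hg 0).trans (hgK 0)) hc.le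
  have := sub_le_sub_of_hasDerivAt_le (fun t => hasDerivAt_neg_deriv_mul_exp (hV t) (hode t))
    (hasDerivAt_const_mul_exp_mul (-(K / c)) (-c))
    (fun t _ => by
      rw [neg_mul_neg, div_mul_cancel₀ _ hc.ne']
      exact mul_le_mul_of_nonneg_right (hgK t) (exp_pos _).le) hs
  rw [integral_mul_exp_eq_sub hV hode hg, mul_zero, exp_zero, mul_one]
  rw [mul_zero, exp_zero, mul_one] at this
  nlinarith [exp_pos (-c * s)]

end IntegratingFactor

theorem blow_up_rate_at_infinity_general
    (Q R : ℝ → ℝ)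
    (hQ : ∀ v : ℝ, v < -1 → Q v < 0 ∧ Q v - Real.exp (Q v) = v)
    (hR : ∀ v : ℝ, R v = if v < -1 then -2 * (1 - Real.exp (Q v)) ^ 2 else 4 * (v + 1))
    (V : ℝ → ℝ) (m n : ℝ) (hn : 0 < n)
    (hdiff : ∀ s : ℝ, DifferentiableAt ℝ V s ∧ DifferentiableAt ℝ (deriv V) s)
    (hode : ∀ s : ℝ, deriv (deriv V) s - 3 * deriv V s = R (V s))
    (hlt : ∀ s : ℝ, V s < -1)
    (hic : V 0 = m ∧ deriv V 0 = -n)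
    (σ : ℝ → ℝ)
    (hσ : ∀ s : ℝ, σ s = 2 * ∫ s₁ in (0 : ℝ)..s,
      (1 - Real.exp (Q (V s₁))) ^ 2 * Real.exp (-3 * s₁)) :
    (∀ s : ℝ, 0 ≤ s → deriv V s = -(n + σ s) * Real.exp (3 * s)) ∧
    MonotoneOn σ (Set.Ici 0) ∧
    (∃ M : ℝ, ∀ s : ℝ, 0 ≤ s → σ s ≤ M) ∧
    σ 0 = 0 ∧
    (∃ c₁ c₂ s₀ : ℝ, 0 < c₁ ∧ c₁ ≤ c₂ ∧ 0 ≤ s₀ ∧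
      ∀ s : ℝ, s₀ ≤ s →
        c₁ * Real.exp (3 * s) ≤ -V s ∧ -V s ≤ c₂ * Real.exp (3 * s)) := by
  set g : ℝ → ℝ := fun t => 2 * (1 - exp (Q (V t))) ^ 2
  have hg (t : ℝ) : 0 ≤ g t := by positivity
  have hg_le (t : ℝ) : g t ≤ 2 := by
    linarith [one_sub_exp_sq_le_one (hQ _ (hlt t)).1.le]
  have hVg (t : ℝ) : deriv (deriv V) t - 3 * deriv V t = -g t := by
    rw [hode, hR, if_pos (hlt t)]
    ring
  have hV := fun t => (hdiff t).2
  obtain rfl : σ = fun s => ∫ t in 0..s, g t * exp (-3 * t) := funext fun s => by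
    simp only [hσ, g, ← intervalIntegral.integral_const_mul, mul_assoc]
  have hσ_mono := monotone_integral_mul_exp hV hVg hg
  have hσ_nonneg {s : ℝ} (hs : 0 ≤ s) : 0 ≤ ∫ t in 0..s, g t * exp (-3 * t) := by
    simpa using hσ_mono hs
  have hσ_le {s : ℝ} (hs : 0 ≤ s) : ∫ t in 0..s, g t * exp (-3 * t) ≤ 2 / 3 :=
    integral_mul_exp_le hV hVg hg hg_le three_pos hs
  have hV' (s : ℝ) : deriv V s = -(n + ∫ t in 0..s, g t * exp (-3 * t)) * exp (3 * s) := by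
    rw [deriv_eq_sub_integral_mul_exp hV hVg hg, hic.2]
    ring
  refine ⟨fun s _ => hV' s, hσ_mono.monotoneOn _, ⟨2 / 3, fun s => hσ_le⟩,
    intervalIntegral.integral_same, ?_⟩
  refine exists_mul_exp_le_neg_le_mul_exp (a := n) (b := n + 2 / 3) (fun t => (hdiff t).1) hn
    (by linarith) three_pos fun t ht => ?_
  rw [hV' t]
  have := exp_pos (3 * t)
  constructor <;> nlinarith [hσ_nonneg ht.le, hσ_le ht.le]

/-- Blow-up rate at `s = +∞`: if `V` solves `V'' - 3V' = R(V)` on `ℝ` with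
`V < -1` everywhere, `V(-∞) = -1`, `V(+∞) = -∞`, normalized by `V(0) = m`,
`V'(0) = -n` with `n > 0`, then `V'(s) = -(n + σ(s)) e^{3s}` for all `s ≥ 0`,
where `σ(s) = 2 ∫₀^s (1 - e^{Q(V(s₁))})² e^{-3s₁} ds₁` is a bounded increasing
function on `[0, ∞)` with `σ(0) = 0`; in particular `V(s)` blows up to `-∞`
exactly as fast as `-e^{3s}`. -/
theorem blow_up_rate_at_infinity
    (Q R : ℝ → ℝ)
    (hQ : ∀ v : ℝ, v < -1 → Q v < 0 ∧ Q v - Real.exp (Q v) = v)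
    (hR : ∀ v : ℝ, R v = if v < -1 then -2 * (1 - Real.exp (Q v)) ^ 2 else 4 * (v + 1))
    (V : ℝ → ℝ) (m n : ℝ) (hn : 0 < n)
    (hdiff : ∀ s : ℝ, DifferentiableAt ℝ V s ∧ DifferentiableAt ℝ (deriv V) s)
    (hode : ∀ s : ℝ, deriv (deriv V) s - 3 * deriv V s = R (V s))
    (hlt : ∀ s : ℝ, V s < -1)
    (hbot : Tendsto V atBot (nhds (-1)))
    (htop : Tendsto V atTop atBot)
    (hic : V 0 = m ∧ deriv V 0 = -n)
    (σ : ℝ → ℝ)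
    (hσ : ∀ s : ℝ, σ s = 2 * ∫ s₁ in (0 : ℝ)..s,
      (1 - Real.exp (Q (V s₁))) ^ 2 * Real.exp (-3 * s₁)) :
    (∀ s : ℝ, 0 ≤ s → deriv V s = -(n + σ s) * Real.exp (3 * s)) ∧
    MonotoneOn σ (Set.Ici 0) ∧
    (∃ M : ℝ, ∀ s : ℝ, 0 ≤ s → σ s ≤ M) ∧
    σ 0 = 0 ∧
    (∃ c₁ c₂ s₀ : ℝ, 0 < c₁ ∧ c₁ ≤ c₂ ∧ 0 ≤ s₀ ∧
      ∀ s : ℝ, s₀ ≤ s →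
        c₁ * Real.exp (3 * s) ≤ -V s ∧ -V s ≤ c₂ * Real.exp (3 * s)) :=
  blow_up_rate_at_infinity_general Q R hQ hR V m n hn hdiff hode hlt hic σ hσ
end

section
/- Let V : ℝ → ℝ be a solution of V'' - 3V' = R(V) on ℝ with V < -1 everywhere, strictly decreasing, V(-∞) = -1 and V(+∞) = -∞. Then for every ε ∈ (0, 1) there exists a constant C(ε) > 0 such that |V'(s)| ≤ C(ε)·e^{4(1-ε)s} for all s ≤ 0, i.e. V'(s) = O(e^{4(1-ε)s}) as s → -∞. -/
/-!
Write `u = V + 1 < 0`, `W = V'` and `q = Q(V)`, so that `u = q + 1 - e^q` and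
`R(V) = 4u + ρ(q)` with `0 ≤ ρ(q) ≤ (4/3)|q|³`, whereas `-u ≥ q²/3`; hence `ρ = o(u)` as `s → -∞`.
The function `z = W - 4u` solves `z' + z = ρ ≥ 0` and is bounded below at `-∞`, so `e^s z` is
nondecreasing with limit `0`, and `W ≥ 4u`. The ratio `r = W/u ≥ 0` obeys the Riccati equation
`r' = (4 - r)(1 + r) + ρ/u`, so near `-∞` it grows at rate at least `3ε` while below `4(1 - ε)`;
since `r` never drops below `0`, it is at least `4(1 - ε)` there. Thus
`(-u)' ≥ 4(1 - ε)(-u)`, whence `|u| ≤ C e^{4(1-ε)s}`, and finally `|W| ≤ 4|u|`.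
-/

open Real Filter Set Topology

lemma le_of_hasDerivAt_nonpos {f f' : ℝ → ℝ} {a b : ℝ} (hab : a ≤ b)
    (hf : ∀ x, HasDerivAt f (f' x) x) (hf' : ∀ x ∈ Ioo a b, f' x ≤ 0) : f b ≤ f a :=
  antitoneOn_of_hasDerivWithinAt_nonpos (convex_Icc a b)
    (fun x _ => (hf x).continuousAt.continuousWithinAt) (fun x _ => (hf x).hasDerivWithinAt)
    (by rwa [interior_Icc]) (left_mem_Icc.2 hab) (right_mem_Icc.2 hab) hab

lemma exp_le_quadratic_of_nonpos {q : ℝ} (hq : q ≤ 0) : exp q ≤ 1 + q + q ^ 2 / 2 := by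
  have h := le_of_hasDerivAt_nonpos (f := fun x => 1 + x + x ^ 2 / 2 - exp x)
    (f' := fun x => 1 + x - exp x) hq
    (fun x => ((((hasDerivAt_id' x).const_add 1).add ((hasDerivAt_pow 2 x).div_const 2)).sub
      (hasDerivAt_exp x)).congr_deriv (by ring))
    (fun x _ => by linarith [add_one_le_exp x])
  simp only [ne_eq, OfNat.ofNat_ne_zero, not_false_eq_true, zero_pow, zero_div, add_zero,
    exp_zero, sub_self] at h
  linarith

lemma sq_div_three_le_exp_sub_sub_one {q : ℝ} (hq : -(2 / 3) ≤ q) (hq0 : q ≤ 0) :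
    q ^ 2 / 3 ≤ exp q - q - 1 := by
  have h := le_of_hasDerivAt_nonpos (f := fun x => exp x - x - 1 - x ^ 2 / 3)
    (f' := fun x => exp x - 1 - 2 * x / 3) hq0
    (fun x => ((((hasDerivAt_exp x).sub (hasDerivAt_id' x)).sub_const 1).sub
      ((hasDerivAt_pow 2 x).div_const 3)).congr_deriv (by ring))
    (fun x hx => by nlinarith [exp_le_quadratic_of_nonpos hx.2.le, hx.1, hx.2])
  simp only [exp_zero, sub_zero, sub_self, ne_eq, OfNat.ofNat_ne_zero, not_false_eq_true,
    zero_pow, zero_div] at h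
  linarith

noncomputable def rho (q : ℝ) : ℝ := 4 * (exp q - q - 1) - 2 * (1 - exp q) ^ 2

lemma hasDerivAt_rho (x : ℝ) : HasDerivAt rho (-4 * (1 - exp x) ^ 2) x :=
  (((((hasDerivAt_exp x).sub (hasDerivAt_id' x)).sub_const 1).const_mul 4).sub
    ((((hasDerivAt_exp x).const_sub 1).pow 2).const_mul 2)).congr_deriv (by ring)

lemma rho_nonneg {q : ℝ} (hq : q ≤ 0) : 0 ≤ rho q := by
  have h := le_of_hasDerivAt_nonpos hq hasDerivAt_rho
    (fun x _ => by nlinarith [sq_nonneg (1 - exp x)])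
  simpa [rho] using h

lemma rho_le_cube {q : ℝ} (hq : q ≤ 0) : rho q ≤ 4 / 3 * (-q) ^ 3 := by
  have h := le_of_hasDerivAt_nonpos (f := fun x => 4 / 3 * (-x) ^ 3 - rho x)
    (f' := fun x => 4 * (1 - exp x) ^ 2 - 4 * x ^ 2) hq
    (fun x => ((((hasDerivAt_neg x).pow 3).const_mul (4 / 3)).sub (hasDerivAt_rho x)).congr_deriv
      (by ring))
    (fun x hx => by
      have h1 : 0 ≤ 1 - exp x := by linarith [exp_le_one_iff.2 hx.2.le]
      have h2 : 1 - exp x ≤ -x := by linarith [add_one_le_exp x]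
      nlinarith)
  simp only [neg_zero, ne_eq, OfNat.ofNat_ne_zero, not_false_eq_true, zero_pow, mul_zero,
    zero_sub] at h
  have : rho 0 = 0 := by simp [rho]
  linarith

lemma rho_le_mul_exp_sub_sub_one {ε q : ℝ} (hε : 0 ≤ ε) (hq : -min (ε / 4) (2 / 3) ≤ q)
    (hq0 : q ≤ 0) : rho q ≤ ε * (exp q - q - 1) := by
  have h1 : -q ≤ ε / 4 := by linarith [min_le_left (ε / 4) (2 / 3)]
  have h2 := sq_div_three_le_exp_sub_sub_one (by linarith [min_le_right (ε / 4) (2 / 3)]) hq0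
  calc rho q ≤ 4 / 3 * (-q) ^ 3 := rho_le_cube hq0
    _ = 4 / 3 * (-q) * q ^ 2 := by ring
    _ ≤ 4 / 3 * (ε / 4) * q ^ 2 := by gcongr
    _ ≤ ε * (exp q - q - 1) := by nlinarith

section Reaction

variable {Q R : ℝ → ℝ}

lemma R_eq_of_lt (hQ : ∀ v : ℝ, v < -1 → Q v < 0 ∧ Q v - exp (Q v) = v)
    (hR : ∀ v : ℝ, R v = if v < -1 then -2 * (1 - exp (Q v)) ^ 2 else 4 * (v + 1))
    {v : ℝ} (hv : v < -1) : R v = 4 * (v + 1) + rho (Q v) := by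
  rw [hR, if_pos hv, rho]
  linear_combination 4 * (hQ v hv).2

lemma R_nonpos_of_lt
    (hR : ∀ v : ℝ, R v = if v < -1 then -2 * (1 - exp (Q v)) ^ 2 else 4 * (v + 1))
    {v : ℝ} (hv : v < -1) : R v ≤ 0 := by
  rw [hR, if_pos hv]
  nlinarith [sq_nonneg (1 - exp (Q v))]

lemma four_mul_add_one_le_R (hQ : ∀ v : ℝ, v < -1 → Q v < 0 ∧ Q v - exp (Q v) = v)
    (hR : ∀ v : ℝ, R v = if v < -1 then -2 * (1 - exp (Q v)) ^ 2 else 4 * (v + 1))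
    {v : ℝ} (hv : v < -1) : 4 * (v + 1) ≤ R v := by
  rw [R_eq_of_lt hQ hR hv]
  linarith [rho_nonneg (hQ v hv).1.le]

lemma eventually_R_sub_le (hQ : ∀ v : ℝ, v < -1 → Q v < 0 ∧ Q v - exp (Q v) = v)
    (hR : ∀ v : ℝ, R v = if v < -1 then -2 * (1 - exp (Q v)) ^ 2 else 4 * (v + 1))
    {ε : ℝ} (hε : 0 < ε) : ∀ᶠ v in 𝓝[<] (-1), R v - 4 * (v + 1) ≤ ε * -(v + 1) := by
  set c := min (ε / 4) (2 / 3)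
  have hc : 0 < c := lt_min (by positivity) (by norm_num)
  have hlow : -c - exp (-c) < -1 := by linarith [add_one_lt_exp (x := -c) (by linarith)]
  filter_upwards [Ioo_mem_nhdsLT hlow] with v hv
  obtain ⟨hq, hqv⟩ := hQ v hv.2
  have hqc : -c ≤ Q v := by
    by_contra! h
    have := le_of_hasDerivAt_nonpos (f := fun x => exp x - x) (f' := fun x => exp x - 1) h.le
      (fun x => ((hasDerivAt_exp x).sub (hasDerivAt_id' x)).congr_deriv (by ring))
      (fun x hx => by linarith [exp_le_one_iff.2 (hx.2.trans (neg_lt_zero.2 hc)).le])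
    linarith [hv.1]
  have := rho_le_mul_exp_sub_sub_one hε.le hqc hq.le
  rw [R_eq_of_lt hQ hR hv.2, show -(v + 1) = exp (Q v) - Q v - 1 by linarith]
  linarith

end Reaction

lemma nonneg_of_deriv_add_self_nonneg {z z' : ℝ → ℝ} {a m : ℝ}
    (hz : ∀ s, HasDerivAt z (z' s) s) (hz' : ∀ s, 0 ≤ z' s + z s) (hm : ∀ s ≤ a, m ≤ z s)
    (s : ℝ) : 0 ≤ z s := by
  have hmono : Monotone fun t => exp t * z t :=
    monotone_of_hasDerivAt_nonneg (f' := fun t => exp t * (z' t + z t))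
      (fun t => ((hasDerivAt_exp t).mul (hz t)).congr_deriv (by ring))
      (fun t => mul_nonneg (exp_pos t).le (hz' t))
  have hlim : Tendsto (fun t => exp t * m) atBot (𝓝 0) := by
    simpa using tendsto_exp_atBot.mul_const m
  have hs : 0 ≤ exp s * z s := by
    refine le_of_tendsto hlim ?_
    filter_upwards [eventually_le_atBot (min s a)] with t ht
    calc exp t * m ≤ exp t * z t := by gcongr; exact hm t (ht.trans (min_le_right s a))
      _ ≤ exp s * z s := hmono (ht.trans (min_le_left s a))
  exact (mul_nonneg_iff_of_pos_left (exp_pos s)).1 hs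

lemma le_of_forall_lt_imp_le_deriv {r r' : ℝ → ℝ} {a c δ : ℝ} (hδ : 0 < δ)
    (hr : ∀ s, HasDerivAt r (r' s) s) (hr0 : ∀ s ≤ a, 0 ≤ r s)
    (hr' : ∀ s ≤ a, r s < c → δ ≤ r' s) {s : ℝ} (hs : s ≤ a) : c ≤ r s := by
  rcases le_or_gt c 0 with hc | hc
  · exact hc.trans (hr0 s hs)
  set t := s - 2 * c / δ
  have hts : t < s := sub_lt_self s (by positivity)
  have hslope : δ / 2 * (s - t) = c := by simp only [t]; field_simp; ring
  have hline : ∀ x, HasDerivAt (fun x => δ / 2 * (x - t)) (δ / 2) x := fun x =>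
    (((hasDerivAt_id' x).sub_const t).const_mul (δ / 2)).congr_deriv (by ring)
  have := image_le_of_deriv_right_lt_deriv_boundary (a := t) (b := s)
    (fun x _ => (hline x).continuousAt.continuousWithinAt) (fun x _ => (hline x).hasDerivWithinAt)
    (by simpa using hr0 t (hts.le.trans hs)) hr
    (fun x hx hrx => by
      have hlt : r x < c := by
        rw [← hrx, ← hslope]; exact mul_lt_mul_of_pos_left (by linarith [hx.2]) (by positivity)
      linarith [hr' x (hx.2.le.trans hs) hlt])
    (right_mem_Icc.2 hts.le)
  rwa [hslope] at this

lemma le_mul_exp_of_mul_le_deriv {p p' : ℝ → ℝ} {a κ : ℝ} (hp : ∀ s, HasDerivAt p (p' s) s)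
    (h : ∀ s ≤ a, κ * p s ≤ p' s) {s : ℝ} (hs : s ≤ a) : p s ≤ p a * exp (κ * (s - a)) := by
  have hderiv : ∀ t, HasDerivAt (fun t => exp (-κ * t) * p t)
      (exp (-κ * t) * (p' t - κ * p t)) t := fun t =>
    ((((hasDerivAt_id' t).const_mul (-κ)).exp).mul (hp t)).congr_deriv (by ring)
  have hmono : MonotoneOn (fun t => exp (-κ * t) * p t) (Iic a) :=
    monotoneOn_of_hasDerivWithinAt_nonneg (convex_Iic a)
      (fun t _ => (hderiv t).continuousAt.continuousWithinAt)
      (fun t _ => (hderiv t).hasDerivWithinAt)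
      (fun t ht => by
        rw [interior_Iic] at ht
        exact mul_nonneg (exp_pos _).le (sub_nonneg.2 (h t ht.le)))
  have hle := hmono hs (mem_Iic.2 le_rfl) hs
  calc p s = exp (κ * s) * (exp (-κ * s) * p s) := by
        rw [← mul_assoc, ← exp_add, neg_mul, add_neg_cancel, exp_zero, one_mul]
    _ ≤ exp (κ * s) * (exp (-κ * a) * p a) := by gcongr
    _ = p a * exp (κ * (s - a)) := by rw [mul_comm (p a), ← mul_assoc, ← exp_add]; ring_nf

lemma exists_pos_le_mul_exp_of_mul_le_deriv {p p' : ℝ → ℝ} {a κ : ℝ} (hκ : 0 ≤ κ)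
    (hp : ∀ s, HasDerivAt p (p' s) s) (hmono : Monotone p) (hp0 : 0 < p 0)
    (h : ∀ s ≤ a, κ * p s ≤ p' s) : ∃ C, 0 < C ∧ ∀ s ≤ 0, p s ≤ C * exp (κ * s) := by
  set b := min a 0
  refine ⟨p 0 * exp (-(κ * b)), by positivity, fun s hs => ?_⟩
  rw [mul_assoc, ← exp_add, show -(κ * b) + κ * s = κ * (s - b) by ring]
  rcases le_total s b with hsb | hbs
  · calc p s ≤ p b * exp (κ * (s - b)) :=
          le_mul_exp_of_mul_le_deriv hp (fun t ht => h t (ht.trans (min_le_left a 0))) hsb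
      _ ≤ p 0 * exp (κ * (s - b)) := by gcongr; exact hmono (min_le_right a 0)
  · calc p s ≤ p 0 := hmono hs
      _ ≤ p 0 * exp (κ * (s - b)) :=
          le_mul_of_one_le_right hp0.le (one_le_exp (mul_nonneg hκ (sub_nonneg.2 hbs)))

section Profile

variable {R V W : ℝ → ℝ}

lemma four_mul_add_one_le_of_ode (hV : ∀ s, HasDerivAt V (W s) s)
    (hW : ∀ s, HasDerivAt W (3 * W s + R (V s)) s) (hRV : ∀ s, 4 * (V s + 1) ≤ R (V s))
    (hlt : ∀ s, V s < -1) (hWanti : Antitone W) (s : ℝ) : 4 * (V s + 1) ≤ W s := by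
  have hz : ∀ s, HasDerivAt (fun t => W t - 4 * (V t + 1)) (R (V s) - W s) s := fun s =>
    ((hW s).sub (((hV s).add_const 1).const_mul 4)).congr_deriv (by ring)
  have := nonneg_of_deriv_add_self_nonneg (a := 0) (m := W 0) hz (fun s => by linarith [hRV s])
    (fun s hs => by linarith [hWanti hs, hlt s]) s
  linarith

lemma four_mul_one_sub_le_div_of_ode {ε a : ℝ} (hε : 0 < ε) (hV : ∀ s, HasDerivAt V (W s) s)
    (hW : ∀ s, HasDerivAt W (3 * W s + R (V s)) s) (hlt : ∀ s, V s < -1) (hW0 : ∀ s, W s ≤ 0)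
    (hρ : ∀ s ≤ a, R (V s) - 4 * (V s + 1) ≤ ε * -(V s + 1)) {s : ℝ} (hs : s ≤ a) :
    4 * (1 - ε) ≤ W s / (V s + 1) := by
  have hu : ∀ s, V s + 1 < 0 := fun s => by linarith [hlt s]
  have hr0 : ∀ s, 0 ≤ W s / (V s + 1) := fun s => div_nonneg_of_nonpos (hW0 s) (hu s).le
  refine le_of_forall_lt_imp_le_deriv (r := fun s => W s / (V s + 1)) (δ := 3 * ε) (by positivity)
    (fun s => (hW s).div ((hV s).add_const 1) (hu s).ne) (fun s _ => hr0 s) (fun s hs hr => ?_) hs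
  -- with `r = W / u`, the Riccati equation reads `r' = (4 - r) (1 + r) + (R(V) - 4u) / u`
  set u := V s + 1
  set r := W s / u
  have hu0 : u < 0 := hu s
  have hW : W s = r * u := (div_mul_cancel₀ _ hu0.ne).symm
  rw [le_div_iff₀ (sq_pos_of_neg hu0), hW]
  nlinarith [mul_nonneg (sub_nonneg.2 (hρ s hs)) (neg_nonneg.2 hu0.le),
    mul_nonneg (mul_nonneg (sub_nonneg.2 hr.le) (by linarith [hr0 s] : 0 ≤ 1 + r)) (sq_nonneg u),
    mul_nonneg (hr0 s) (sq_nonneg u)]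

end Profile

theorem derivative_decay_at_minus_infinity_general
    (Q R : ℝ → ℝ)
    (hQ : ∀ v : ℝ, v < -1 → Q v < 0 ∧ Q v - Real.exp (Q v) = v)
    (hR : ∀ v : ℝ, R v = if v < -1 then -2 * (1 - Real.exp (Q v)) ^ 2 else 4 * (v + 1))
    (V : ℝ → ℝ)
    (hdiff : ∀ s : ℝ, DifferentiableAt ℝ V s ∧ DifferentiableAt ℝ (deriv V) s)
    (hode : ∀ s : ℝ, deriv (deriv V) s - 3 * deriv V s = R (V s))
    (hlt : ∀ s : ℝ, V s < -1)
    (hanti : StrictAnti V)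
    (hbot : Tendsto V atBot (nhds (-1))) :
    ∀ ε : ℝ, 0 < ε → ε < 1 → ∃ C : ℝ, 0 < C ∧
      ∀ s : ℝ, s ≤ 0 → |deriv V s| ≤ C * Real.exp (4 * (1 - ε) * s) := by
  intro ε hε hε1
  have hV : ∀ s, HasDerivAt V (deriv V s) s := fun s => (hdiff s).1.hasDerivAt
  have hW : ∀ s, HasDerivAt (deriv V) (3 * deriv V s + R (V s)) s := fun s =>
    (hdiff s).2.hasDerivAt.congr_deriv (by linarith [hode s])
  have hW0 : ∀ s, deriv V s ≤ 0 := fun s => hanti.antitone.deriv_nonpos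
  have hWanti : Antitone (deriv V) := antitone_of_hasDerivAt_nonpos hW
    fun s => show 3 * deriv V s + R (V s) ≤ 0 by linarith [hW0 s, R_nonpos_of_lt hR (hlt s)]
  have hVW := four_mul_add_one_le_of_ode hV hW (fun s => four_mul_add_one_le_R hQ hR (hlt s))
    hlt hWanti
  obtain ⟨a, ha⟩ := eventually_atBot.1 <|
    (tendsto_nhdsWithin_iff.2 ⟨hbot, .of_forall hlt⟩).eventually (eventually_R_sub_le hQ hR hε)
  obtain ⟨C, hC, hdecay⟩ := exists_pos_le_mul_exp_of_mul_le_deriv (p := fun s => -(V s + 1))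
    (κ := 4 * (1 - ε)) (by linarith [hε1]) (fun s => ((hV s).add_const 1).neg)
    (fun s t hst => by linarith [hanti.antitone hst]) (by linarith [hlt 0]) (fun s hs => by
      have := four_mul_one_sub_le_div_of_ode hε hV hW hlt hW0 ha hs
      rw [le_div_iff_of_neg (by linarith [hlt s])] at this
      linarith)
  refine ⟨4 * C, by positivity, fun s hs => ?_⟩
  rw [abs_of_nonpos (hW0 s), mul_assoc]
  linarith [hVW s, hdecay s hs]

/-- Decay rate of `V'` at `s = -∞`: if `V` solves `V'' - 3V' = R(V)` on `ℝ`,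
with `V < -1` everywhere, strictly decreasing, `V(-∞) = -1`, `V(+∞) = -∞`,
then for every `ε ∈ (0,1)` there is `C(ε) > 0` with
`|V'(s)| ≤ C(ε) e^{4(1-ε)s}` for all `s ≤ 0`. -/
theorem derivative_decay_at_minus_infinity
    (Q R : ℝ → ℝ)
    (hQ : ∀ v : ℝ, v < -1 → Q v < 0 ∧ Q v - Real.exp (Q v) = v)
    (hR : ∀ v : ℝ, R v = if v < -1 then -2 * (1 - Real.exp (Q v)) ^ 2 else 4 * (v + 1))
    (V : ℝ → ℝ)
    (hdiff : ∀ s : ℝ, DifferentiableAt ℝ V s ∧ DifferentiableAt ℝ (deriv V) s)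
    (hode : ∀ s : ℝ, deriv (deriv V) s - 3 * deriv V s = R (V s))
    (hlt : ∀ s : ℝ, V s < -1)
    (hanti : StrictAnti V)
    (hbot : Tendsto V atBot (nhds (-1)))
    (htop : Tendsto V atTop atBot) :
    ∀ ε : ℝ, 0 < ε → ε < 1 → ∃ C : ℝ, 0 < C ∧
      ∀ s : ℝ, s ≤ 0 → |deriv V s| ≤ C * Real.exp (4 * (1 - ε) * s) :=
  derivative_decay_at_minus_infinity_general Q R hQ hR V hdiff hode hlt hanti hbot
end

section
/- Fix m < -1, for each n ∈ ℝ let V(·; n) : [0, ∞) → ℝ be the unique solution of V'' + 3V' = R(V), V(0) = m, V'(0) = n, and define β⁻ = {n : there exists t > 0 with V'(t; n) < 0}, β⁰ = {n : V'(t; n) > 0 and V(t; n) ≤ -1 for all t > 0}, β⁺ = {n : V'(t; n) > 0 for all t ≥ 0 and V(t; n) > -1 for some t > 0}. Let n₀ be the unique element of β⁰. Then β⁻ and β⁺ are the open intervals β⁻ = (-∞, n₀) and β⁺ = (n₀, +∞). -/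
/-!
Since `G ↦ G - e^G` is increasing on `(-∞, 0]`, so is `Q`, and hence the nonlinearity `R` is
nondecreasing. For a nondecreasing nonlinearity the solutions are ordered by their initial slope:
if `n₁ < n₂` then `W = e^{3t} (V'(t; n₂) - V'(t; n₁))` has derivative `e^{3t} (R(V₂) - R(V₁))`,
which stays nonnegative as long as `V₂ ≥ V₁`, so both `V` and `V'` increase strictly with `n`.
For `n < n₀` the solution then stays strictly below `V(·; n₀) ≤ -1`, where `R < 0`; a nonnegative
`V'` could only vanish at a local minimum, where `V'' = R(V) < 0`, so a nonnegative `V'` would put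
`n` into `β⁰ = {n₀}`. For `n > n₀` the slope stays above `V'(·; n₀) > 0`, and `V ≤ -1` throughout
would again put `n` into `β⁰`.
-/

open Real Filter Set

lemma strictMonoOn_sub_exp : StrictMonoOn (fun x : ℝ => x - exp x) (Iic 0) := by
  refine strictMonoOn_of_hasDerivWithinAt_pos (convex_Iic 0) (by fun_prop)
    (f' := fun x => 1 - exp x)
    (fun x _ => ((hasDerivAt_id x).sub (hasDerivAt_exp x)).hasDerivWithinAt) fun x hx => ?_
  rw [interior_Iic] at hx
  exact sub_pos.2 (exp_lt_one_iff.2 hx)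

section Nonlinearity

variable {Q R : ℝ → ℝ}
  (hQ : ∀ v : ℝ, v < -1 → Q v < 0 ∧ Q v - exp (Q v) = v)
  (hR : ∀ v : ℝ, R v = if v < -1 then -2 * (1 - exp (Q v)) ^ 2 else 4 * (v + 1))
include hQ

lemma monotoneOn_of_sub_exp_eq : MonotoneOn Q (Iio (-1)) := by
  intro a ha b hb hab
  obtain ⟨hQa, hQa_eq⟩ := hQ a ha
  obtain ⟨hQb, hQb_eq⟩ := hQ b hb
  exact (strictMonoOn_sub_exp.le_iff_le hQa.le hQb.le).1 (by simpa [hQa_eq, hQb_eq] using hab)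

include hR

lemma nonlinearity_neg {v : ℝ} (hv : v < -1) : R v < 0 := by
  have : 0 < 1 - exp (Q v) := sub_pos.2 (exp_lt_one_iff.2 (hQ v hv).1)
  rw [hR, if_pos hv]
  nlinarith

lemma nonlinearity_monotone : Monotone R := by
  intro a b hab
  rw [hR a, hR b]
  split_ifs with ha hb hb
  · have hQab := exp_le_exp.2 (monotoneOn_of_sub_exp_eq hQ ha hb hab)
    have hQb := exp_lt_one_iff.2 (hQ b hb).1
    nlinarith
  · nlinarith [sq_nonneg (1 - exp (Q a))]
  · linarith
  · linarith

end Nonlinearity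

lemma pos_of_forall_Ico_pos {g : ℝ → ℝ} (hg : ContinuousOn g (Ici 0)) (h0 : 0 < g 0)
    (hstep : ∀ T > 0, (∀ s ∈ Ico 0 T, 0 < g s) → 0 < g T) {t : ℝ} (ht : 0 ≤ t) : 0 < g t := by
  by_contra! hgt
  have hK : IsCompact (Icc 0 t ∩ g ⁻¹' Iic 0) :=
    isCompact_Icc.of_isClosed_subset ((hg.mono Icc_subset_Ici_self).preimage_isClosed_of_isClosed
      isClosed_Icc isClosed_Iic) inter_subset_left
  obtain ⟨T, ⟨⟨hT0, hTt⟩, hgT⟩, hTmin⟩ := hK.exists_isLeast ⟨t, ⟨ht, le_rfl⟩, hgt⟩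
  have hT : 0 < T := hT0.lt_of_ne (by rintro rfl; exact (not_le.2 h0) hgT)
  refine (not_le.2 (hstep T hT fun s hs => ?_)) hgT
  by_contra! hgs
  exact (not_le.2 hs.2) (hTmin ⟨⟨hs.1, hs.2.le.trans hTt⟩, hgs⟩)

section Comparison

variable {c : ℝ} {f u v : ℝ → ℝ} (hf : Monotone f)
  (hu : ∀ t : ℝ, 0 ≤ t → DifferentiableAt ℝ u t ∧ DifferentiableAt ℝ (deriv u) t)
  (hv : ∀ t : ℝ, 0 ≤ t → DifferentiableAt ℝ v t ∧ DifferentiableAt ℝ (deriv v) t)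
  (hu' : ∀ t : ℝ, 0 ≤ t → deriv (deriv u) t + c * deriv u t = f (u t))
  (hv' : ∀ t : ℝ, 0 ≤ t → deriv (deriv v) t + c * deriv v t = f (v t))
include hu hv

lemma hasDerivAt_sub_of_nonneg {t : ℝ} (ht : 0 ≤ t) :
    HasDerivAt (fun s => v s - u s) (deriv v t - deriv u t) t :=
  (hv t ht).1.hasDerivAt.sub (hu t ht).1.hasDerivAt

include hu' hv' in
lemma hasDerivAt_exp_mul_deriv_sub {t : ℝ} (ht : 0 ≤ t) :
    HasDerivAt (fun s => exp (c * s) * (deriv v s - deriv u s))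
      (exp (c * t) * (f (v t) - f (u t))) t := by
  have hexp : HasDerivAt (fun s => exp (c * s)) (exp (c * t) * c) t := by
    simpa using ((hasDerivAt_id t).const_mul c).exp
  refine (hexp.mul ((hv t ht).2.hasDerivAt.sub (hu t ht).2.hasDerivAt)).congr_deriv ?_
  rw [← hu' t ht, ← hv' t ht, Pi.sub_apply]
  ring

/- Continuous induction up to the first zero of `v' - u'`: before it `v - u` increases, so
`f v ≥ f u` and the integrating factor keeps `e^{ct} (v' - u')` above its initial value. -/
include hf hu' hv' in
lemma deriv_lt_deriv_of_ode (h0 : u 0 ≤ v 0) (h0' : deriv u 0 < deriv v 0) {t : ℝ}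
    (ht : 0 ≤ t) : deriv u t < deriv v t := by
  refine sub_pos.1 (pos_of_forall_Ico_pos (g := fun s => deriv v s - deriv u s)
    (fun s hs => ((hv s hs).2.sub (hu s hs).2).continuousAt.continuousWithinAt)
    (sub_pos.2 h0') (fun T hT hpos => ?_) ht)
  have hsub : MonotoneOn (fun s => v s - u s) (Icc 0 T) :=
    monotoneOn_of_hasDerivWithinAt_nonneg (convex_Icc 0 T)
      (fun s hs => (hasDerivAt_sub_of_nonneg hu hv hs.1).continuousAt.continuousWithinAt)
      (fun s hs => (hasDerivAt_sub_of_nonneg hu hv (interior_subset hs).1).hasDerivWithinAt)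
      (fun s hs => (hpos s (Ioo_subset_Ico_self (by rwa [interior_Icc] at hs))).le)
  have hW : MonotoneOn (fun s => exp (c * s) * (deriv v s - deriv u s)) (Icc 0 T) := by
    refine monotoneOn_of_hasDerivWithinAt_nonneg (convex_Icc 0 T)
      (fun s hs => (hasDerivAt_exp_mul_deriv_sub hu hv hu' hv' hs.1).continuousAt
        |>.continuousWithinAt)
      (fun s hs => (hasDerivAt_exp_mul_deriv_sub hu hv hu' hv'
        (interior_subset hs).1).hasDerivWithinAt) fun s hs => ?_
    have hs' := interior_subset hs
    have huv : u s ≤ v s := sub_nonneg.1 <| (sub_nonneg.2 h0).trans <|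
      by simpa using hsub (left_mem_Icc.2 hT.le) hs' hs'.1
    exact mul_nonneg (exp_pos _).le (sub_nonneg.2 (hf huv))
  have hWT := hW (left_mem_Icc.2 hT.le) (right_mem_Icc.2 hT.le) hT.le
  simp only [mul_zero, exp_zero, one_mul] at hWT
  exact pos_of_mul_pos_right ((sub_pos.2 h0').trans_le hWT) (exp_pos _).le

include hf hu' hv' in
lemma lt_of_ode_of_deriv_lt (h0 : u 0 ≤ v 0) (h0' : deriv u 0 < deriv v 0) {t : ℝ} (ht : 0 < t) :
    u t < v t := by
  have hsub : StrictMonoOn (fun s => v s - u s) (Ici 0) :=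
    strictMonoOn_of_hasDerivWithinAt_pos (convex_Ici 0)
      (fun s hs => (hasDerivAt_sub_of_nonneg hu hv hs).continuousAt.continuousWithinAt)
      (fun s hs => (hasDerivAt_sub_of_nonneg hu hv (interior_subset hs)).hasDerivWithinAt)
      (fun s hs => sub_pos.2 (deriv_lt_deriv_of_ode hf hu hv hu' hv' h0 h0' (interior_subset hs)))
  have := hsub self_mem_Ici ht.le ht
  simp only at this
  linarith

end Comparison

lemma deriv_pos_of_deriv_nonneg {c : ℝ} {f u : ℝ → ℝ}
    (hu' : ∀ t : ℝ, 0 < t → deriv (deriv u) t + c * deriv u t = f (u t))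
    (hf : ∀ t : ℝ, 0 < t → f (u t) < 0) (hnonneg : ∀ t : ℝ, 0 < t → 0 ≤ deriv u t)
    {t : ℝ} (ht : 0 < t) : 0 < deriv u t := by
  refine (hnonneg t ht).lt_of_ne fun hzero => (hf t ht).ne ?_
  have hmin : IsLocalMin (deriv u) t :=
    Filter.mem_of_superset (Ioi_mem_nhds ht) fun s hs => hzero ▸ hnonneg s hs
  rw [← hu' t ht, hmin.deriv_eq_zero, ← hzero, mul_zero, add_zero]

theorem shooting_sets_are_intervals_general
    (Q R : ℝ → ℝ)
    (hQ : ∀ v : ℝ, v < -1 → Q v < 0 ∧ Q v - Real.exp (Q v) = v)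
    (hR : ∀ v : ℝ, R v = if v < -1 then -2 * (1 - Real.exp (Q v)) ^ 2 else 4 * (v + 1))
    (m : ℝ)
    (V : ℝ → ℝ → ℝ)
    (hdiff : ∀ n : ℝ, ∀ t : ℝ, 0 ≤ t →
      DifferentiableAt ℝ (V n) t ∧ DifferentiableAt ℝ (deriv (V n)) t)
    (hode : ∀ n : ℝ, ∀ t : ℝ, 0 ≤ t →
      deriv (deriv (V n)) t + 3 * deriv (V n) t = R (V n t))
    (hic : ∀ n : ℝ, V n 0 = m ∧ deriv (V n) 0 = n)
    (Bm B0 Bp : Set ℝ)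
    (hBm : Bm = {n : ℝ | ∃ t > 0, deriv (V n) t < 0})
    (hB0 : B0 = {n : ℝ | ∀ t > 0, 0 < deriv (V n) t ∧ V n t ≤ -1})
    (hBp : Bp = {n : ℝ | (∀ t : ℝ, 0 ≤ t → 0 < deriv (V n) t) ∧ ∃ t > 0, -1 < V n t})
    (n₀ : ℝ) (hn₀ : B0 = {n₀}) :
    Bm = Set.Iio n₀ ∧ Bp = Set.Ioi n₀ := by
  have hRmono := nonlinearity_monotone hQ hR
  have hV_strictMono {t : ℝ} (ht : 0 < t) : StrictMono fun n => V n t := fun n₁ n₂ h =>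
    lt_of_ode_of_deriv_lt hRmono (hdiff n₁) (hdiff n₂) (hode n₁) (hode n₂)
      (by rw [(hic n₁).1, (hic n₂).1]) (by rwa [(hic n₁).2, (hic n₂).2]) ht
  have hV'_strictMono {t : ℝ} (ht : 0 ≤ t) : StrictMono fun n => deriv (V n) t := fun n₁ n₂ h =>
    deriv_lt_deriv_of_ode hRmono (hdiff n₁) (hdiff n₂) (hode n₁) (hode n₂)
      (by rw [(hic n₁).1, (hic n₂).1]) (by rwa [(hic n₁).2, (hic n₂).2]) ht
  have hB0_iff {n : ℝ} : (∀ t > 0, 0 < deriv (V n) t ∧ V n t ≤ -1) ↔ n = n₀ := by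
    rw [← mem_singleton_iff, ← hn₀, hB0]
    rfl
  have h₀ := hB0_iff.2 rfl
  have hn₀_nonneg : 0 ≤ n₀ := (hic n₀).2 ▸ ge_of_tendsto
    ((hdiff n₀ 0 le_rfl).2.continuousAt.tendsto.mono_left nhdsWithin_le_nhds)
    (eventually_nhdsWithin_of_forall (s := Ioi 0) fun t ht => (h₀ t ht).1.le)
  subst hBm hBp
  refine ⟨Set.ext fun n => ⟨fun ⟨t, ht, hneg⟩ => ?_, fun (hn : n < n₀) => ?_⟩,
    Set.ext fun n => ⟨fun ⟨_, t, ht, hgt⟩ => ?_, fun (hn : n₀ < n) => ?_⟩⟩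
  · exact (hV'_strictMono ht.le).lt_iff_lt.1 (hneg.trans (h₀ t ht).1)
  · show ∃ t > 0, deriv (V n) t < 0
    by_contra! hnonneg
    have hV_lt {t : ℝ} (ht : 0 < t) : V n t < -1 := (hV_strictMono ht hn).trans_le (h₀ t ht).2
    exact hn.ne (hB0_iff.1 fun t ht => ⟨deriv_pos_of_deriv_nonneg (fun t ht => hode n t ht.le)
      (fun t ht => nonlinearity_neg hQ hR (hV_lt ht)) hnonneg ht, (hV_lt ht).le⟩)
  · exact (hV_strictMono ht).lt_iff_lt.1 ((h₀ t ht).2.trans_lt hgt)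
  · have hpos (t : ℝ) (ht : 0 ≤ t) : 0 < deriv (V n) t := by
      rcases ht.eq_or_lt with rfl | ht
      · rw [(hic n).2]
        exact hn₀_nonneg.trans_lt hn
      · exact (h₀ t ht).1.trans (hV'_strictMono ht.le hn)
    refine ⟨hpos, ?_⟩
    by_contra! hle
    exact hn.ne' (hB0_iff.1 fun t ht => ⟨hpos t ht.le, hle t ht⟩)

/-- For fixed `m < -1` and the shooting family `V(·; n)` solving
`V'' + 3V' = R(V)`, `V(0) = m`, `V'(0) = n`, if `n₀` is the unique element
of `β⁰`, then the sets of undesired shooting data are the open intervals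
`β⁻ = (-∞, n₀)` and `β⁺ = (n₀, +∞)`. -/
theorem shooting_sets_are_intervals
    (Q R : ℝ → ℝ)
    (hQ : ∀ v : ℝ, v < -1 → Q v < 0 ∧ Q v - Real.exp (Q v) = v)
    (hR : ∀ v : ℝ, R v = if v < -1 then -2 * (1 - Real.exp (Q v)) ^ 2 else 4 * (v + 1))
    (m : ℝ) (hm : m < -1)
    (V : ℝ → ℝ → ℝ)
    (hdiff : ∀ n : ℝ, ∀ t : ℝ, 0 ≤ t →
      DifferentiableAt ℝ (V n) t ∧ DifferentiableAt ℝ (deriv (V n)) t)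
    (hode : ∀ n : ℝ, ∀ t : ℝ, 0 ≤ t →
      deriv (deriv (V n)) t + 3 * deriv (V n) t = R (V n t))
    (hic : ∀ n : ℝ, V n 0 = m ∧ deriv (V n) 0 = n)
    (Bm B0 Bp : Set ℝ)
    (hBm : Bm = {n : ℝ | ∃ t > 0, deriv (V n) t < 0})
    (hB0 : B0 = {n : ℝ | ∀ t > 0, 0 < deriv (V n) t ∧ V n t ≤ -1})
    (hBp : Bp = {n : ℝ | (∀ t : ℝ, 0 ≤ t → 0 < deriv (V n) t) ∧ ∃ t > 0, -1 < V n t})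
    (n₀ : ℝ) (hn₀ : B0 = {n₀}) :
    Bm = Set.Iio n₀ ∧ Bp = Set.Ioi n₀ :=
  shooting_sets_are_intervals_general Q R hQ hR m V hdiff hode hic Bm B0 Bp hBm hB0 hBp n₀ hn₀
end
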